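/- arXiv:2511.11455 — 5 statements merged into one kernel-verified Lean document; each statement's English description precedes it below -/
import Mathlib

section
/- Let ((c,b),x) be in the graph of the argmin mapping S and assume the Slater constraint qualification holds at b. Then the Nürnberger Condition holds at ((c,b),x) if and only if M_{c,b}(x) = {D ⊂ I_b(x) : −(Qx+c) ∈ cone{a_i : i ∈ D} and |D| = n}; moreover, in this description the condition |D| = n can be replaced by the condition that {a_i : i ∈ D} is a basis of ℝ^n. -/
open Matrix Set Topology Filter
open scoped ENNReal

namespace QPLip

variable {n m : ℕ}

/-- The quadratic objective function `(1/2) xᵀQx + cᵀx`. -/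
noncomputable def obj (Q : Matrix (Fin n) (Fin n) ℝ) (c x : Fin n → ℝ) : ℝ :=
  (1 / 2) * (x ⬝ᵥ Q.mulVec x) + c ⬝ᵥ x

/-- The feasible set `F(b) = {x : aᵢ'x ≤ bᵢ, i = 1,…,m}`. -/
def Feas (A : Matrix (Fin m) (Fin n) ℝ) (b : Fin m → ℝ) : Set (Fin n → ℝ) :=
  {x | ∀ i, A i ⬝ᵥ x ≤ b i}

/-- The argmin (optimal set) mapping `S(c,b)`. -/
noncomputable def argminSet (Q : Matrix (Fin n) (Fin n) ℝ) (A : Matrix (Fin m) (Fin n) ℝ)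
    (c : Fin n → ℝ) (b : Fin m → ℝ) : Set (Fin n → ℝ) :=
  {x | x ∈ Feas A b ∧ ∀ y ∈ Feas A b, obj Q c x ≤ obj Q c y}

/-- The active index set `I_b(x)`. -/
def activeIdx (A : Matrix (Fin m) (Fin n) ℝ) (b : Fin m → ℝ) (x : Fin n → ℝ) : Set (Fin m) :=
  {i | A i ⬝ᵥ x = b i}

/-- Conical convex hull of `{aᵢ : i ∈ D}` (equal to `{0}` when `D = ∅`). -/
def coneOf (A : Matrix (Fin m) (Fin n) ℝ) (D : Finset (Fin m)) : Set (Fin n → ℝ) :=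
  {v | ∃ lam : Fin m → ℝ, (∀ i, 0 ≤ lam i) ∧ v = ∑ i ∈ D, lam i • A i}

/-- The family `M_{c,b}(x)` of minimal KKT sets of indices at `((c,b),x)`. -/
def MinKKT (Q : Matrix (Fin n) (Fin n) ℝ) (A : Matrix (Fin m) (Fin n) ℝ)
    (c : Fin n → ℝ) (b : Fin m → ℝ) (x : Fin n → ℝ) : Set (Finset (Fin m)) :=
  {D | ↑D ⊆ activeIdx A b x ∧ -(Q.mulVec x + c) ∈ coneOf A D ∧
    ∀ D' : Finset (Fin m), D' ⊂ D → -(Q.mulVec x + c) ∉ coneOf A D'}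

/-- The extended family `L_{c,b}(x)` of KKT subsets of indices. -/
def ExtKKT (Q : Matrix (Fin n) (Fin n) ℝ) (A : Matrix (Fin m) (Fin n) ℝ)
    (c : Fin n → ℝ) (b : Fin m → ℝ) (x : Fin n → ℝ) : Set (Finset (Fin m)) :=
  {D | ↑D ⊆ activeIdx A b x ∧ LinearIndependent ℝ (fun i : D => A i.1) ∧
    -(Q.mulVec x + c) ∈ coneOf A D}

/-- Slater constraint qualification at `b`. -/
def Slater (A : Matrix (Fin m) (Fin n) ℝ) (b : Fin m → ℝ) : Prop :=
  ∃ y : Fin n → ℝ, ∀ i, A i ⬝ᵥ y < b i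

/-- The Nürnberger condition at `((c,b),x)`. -/
def NCond (Q : Matrix (Fin n) (Fin n) ℝ) (A : Matrix (Fin m) (Fin n) ℝ)
    (c : Fin n → ℝ) (b : Fin m → ℝ) (x : Fin n → ℝ) : Prop :=
  Slater A b ∧ ∀ D : Finset (Fin m), ↑D ⊆ activeIdx A b x →
    -(Q.mulVec x + c) ∈ coneOf A D → n ≤ D.card

/-- The submatrix `A_D` of `A` formed by the rows indexed by `D`. -/
def subA (A : Matrix (Fin m) (Fin n) ℝ) (D : Finset (Fin m)) : Matrix D (Fin n) ℝ :=
  Matrix.of fun i j => A i.1 j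

/-- The KKT matrix `M_D = [[Q, A_Dᵀ],[A_D, 0]]`. -/
noncomputable def MD (Q : Matrix (Fin n) (Fin n) ℝ) (A : Matrix (Fin m) (Fin n) ℝ)
    (D : Finset (Fin m)) : Matrix (Fin n ⊕ D) (Fin n ⊕ D) ℝ :=
  Matrix.fromBlocks Q (subA A D)ᵀ (subA A D) 0

/-- The feasible set of the subproblem `P_D`. -/
def FeasD (A : Matrix (Fin m) (Fin n) ℝ) (D : Finset (Fin m)) (β : D → ℝ) :
    Set (Fin n → ℝ) :=
  {x | ∀ i : D, A i.1 ⬝ᵥ x ≤ β i}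

/-- The optimal set mapping `S_D(c,β)` of the subproblem `P_D(c,β)`. -/
noncomputable def argminD (Q : Matrix (Fin n) (Fin n) ℝ) (A : Matrix (Fin m) (Fin n) ℝ)
    (D : Finset (Fin m)) (c : Fin n → ℝ) (β : D → ℝ) : Set (Fin n → ℝ) :=
  {x | x ∈ FeasD A D β ∧ ∀ y ∈ FeasD A D β, obj Q c x ≤ obj Q c y}

/-- Restriction `b_D` of the right-hand side `b` to the indices in `D`. -/
def restr (b : Fin m → ℝ) (D : Finset (Fin m)) : D → ℝ := fun i => b i.1

/-- `nrm` is a norm on `ℝⁿ`. -/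
structure IsNorm (nrm : (Fin n → ℝ) → ℝ) : Prop where
  definite : ∀ x, nrm x = 0 → x = 0
  smul : ∀ (t : ℝ) (x : Fin n → ℝ), nrm (t • x) = |t| * nrm x
  triangle : ∀ x y, nrm (x + y) ≤ nrm x + nrm y

/-- The dual norm `‖c‖_* = sup {|c'y| : ‖y‖ ≤ 1}`. -/
noncomputable def dualNrm (nrm : (Fin n → ℝ) → ℝ) (c : Fin n → ℝ) : ℝ :=
  sSup {r | ∃ y, nrm y ≤ 1 ∧ r = |c ⬝ᵥ y|}

/-- Distance (with respect to the norm `nrm`) from a point to a set, with `d(x,∅) = +∞`. -/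
noncomputable def dSet (nrm : (Fin n → ℝ) → ℝ) (x : Fin n → ℝ) (S : Set (Fin n → ℝ)) :
    ℝ≥0∞ :=
  ⨅ s ∈ S, ENNReal.ofReal (nrm (x - s))

/-- The distance `max {‖c₁-c₂‖_*, ‖β₁-β₂‖_∞}` in a parameter space `ℝⁿ × ℝ^ι`. -/
noncomputable def pDist (nrm : (Fin n → ℝ) → ℝ) {ι : Type} [Fintype ι]
    (p q : (Fin n → ℝ) × (ι → ℝ)) : ℝ :=
  max (dualNrm nrm (p.1 - q.1)) ‖p.2 - q.2‖

/-- The Aubin property of a set-valued mapping `G` at `(pbar, xbar)`, where the parameter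
space carries the distance `pd` and `ℝⁿ` the norm `nrm`. -/
def AubinAt {P : Type*} [TopologicalSpace P] (nrm : (Fin n → ℝ) → ℝ) (pd : P → P → ℝ)
    (G : P → Set (Fin n → ℝ)) (pbar : P) (xbar : Fin n → ℝ) : Prop :=
  ∃ κ : ℝ, 0 ≤ κ ∧ ∃ V ∈ 𝓝 pbar, ∃ U ∈ 𝓝 xbar,
    ∀ p1 ∈ V, ∀ p2 ∈ V, ∀ x2 ∈ G p2 ∩ U,
      dSet nrm x2 (G p1) ≤ ENNReal.ofReal (κ * pd p2 p1)

/-- The Lipschitz modulus of `G` at `(pbar, xbar)`: the infimum in `[0,+∞]` of all Lipschitz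
constants `κ` in the definition of the Aubin property (`+∞` if the Aubin property fails). -/
noncomputable def lipMod {P : Type*} [TopologicalSpace P] (nrm : (Fin n → ℝ) → ℝ)
    (pd : P → P → ℝ) (G : P → Set (Fin n → ℝ)) (pbar : P) (xbar : Fin n → ℝ) : ℝ≥0∞ :=
  ⨅ κ ∈ {κ : ℝ | 0 ≤ κ ∧ ∃ V ∈ 𝓝 pbar, ∃ U ∈ 𝓝 xbar,
    ∀ p1 ∈ V, ∀ p2 ∈ V, ∀ x2 ∈ G p2 ∩ U,
      dSet nrm x2 (G p1) ≤ ENNReal.ofReal (κ * pd p2 p1)}, ENNReal.ofReal κ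

/-- Strong Lipschitz stability of `G` at `pbar`: single-valuedness in a neighborhood of
`pbar` together with Lipschitz continuity there. -/
def StrongLipStable {P : Type*} [TopologicalSpace P] (nrm : (Fin n → ℝ) → ℝ)
    (pd : P → P → ℝ) (G : P → Set (Fin n → ℝ)) (pbar : P) : Prop :=
  ∃ V ∈ 𝓝 pbar, (∀ p ∈ V, ∃! x, x ∈ G p) ∧
    ∃ κ : ℝ, 0 ≤ κ ∧ ∀ p1 ∈ V, ∀ p2 ∈ V, ∀ x1 ∈ G p1, ∀ x2 ∈ G p2,
      nrm (x1 - x2) ≤ κ * pd p1 p2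

/-- The matrix `(I_n | 0_{n×|D|})`. -/
noncomputable def projMat (n : ℕ) {m : ℕ} (D : Finset (Fin m)) :
    Matrix (Fin n) (Fin n ⊕ D) ℝ :=
  Matrix.fromCols 1 0

/-- Operator norm of a matrix from `(ℝ^ι, ‖·‖_∞)` to `(ℝⁿ, nrm)`. -/
noncomputable def opNormInf (nrm : (Fin n → ℝ) → ℝ) {ι : Type} [Fintype ι]
    (B : Matrix (Fin n) ι ℝ) : ℝ :=
  sSup {r | ∃ v : ι → ℝ, ‖v‖ ≤ 1 ∧ r = nrm (B.mulVec v)}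

/-- Operator norm of a matrix from `(ℝⁿ × ℝ^ι, max {‖·‖_*, ‖·‖_∞})` to `(ℝⁿ, nrm)`. -/
noncomputable def opNormMixed (nrm : (Fin n → ℝ) → ℝ) {ι : Type} [Fintype ι]
    (B : Matrix (Fin n) (Fin n ⊕ ι) ℝ) : ℝ :=
  sSup {r | ∃ (α : Fin n → ℝ) (β : ι → ℝ), dualNrm nrm α ≤ 1 ∧ ‖β‖ ≤ 1 ∧
    r = nrm (B.mulVec (Sum.elim α β))}


/-- The matrix `A_Dᵀ (A_D A_Dᵀ)⁻¹`, which is the two-sided inverse of `A_D` whenever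
`A_D` is square and invertible. -/
noncomputable def pinvA (A : Matrix (Fin m) (Fin n) ℝ) (D : Finset (Fin m)) :
    Matrix (Fin n) D ℝ :=
  (subA A D)ᵀ * ((subA A D) * (subA A D)ᵀ)⁻¹

end QPLip

open QPLip

/-! A minimal KKT set is linearly independent: a linear dependence among its rows can be
subtracted from the multipliers until one of them vanishes (the conic Carathéodory argument),
so it has at most `n` elements. Hence the Nürnberger condition, which asks every KKT set to
have at least `n` elements, says exactly that the minimal ones have exactly `n`, i.e. that
their rows form a basis. -/

theorem forall_le_card_iff_setOf_minimal_eq {ι : Type*} {P cond : Finset ι → Prop} {n : ℕ}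
    (hmin : ∀ D, Minimal P D → D.card ≤ n) (hcond : ∀ D, cond D → D.card = n)
    (hcond_of_card : ∀ D, Minimal P D → D.card = n → cond D) :
    (∀ D, P D → n ≤ D.card) ↔ {D | Minimal P D} = {D | P D ∧ cond D} := by
  constructor
  · intro hle
    ext D
    refine ⟨fun hD => ⟨hD.prop, hcond_of_card D hD (le_antisymm (hmin D hD) (hle D hD.prop))⟩,
      fun ⟨hP, hc⟩ => minimal_iff_forall_lt.2 ⟨hP, fun E hED hE => ?_⟩⟩
    have := Finset.card_lt_card hED
    have := hle E hE
    have := hcond D hc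
    omega
  · intro heq D hD
    obtain ⟨E, hED, hE⟩ := exists_minimal_le_of_wellFoundedLT P D hD
    have hE' : E ∈ {D | P D ∧ cond D} := heq ▸ hE
    exact (hcond E hE'.2).symm.trans_le (Finset.card_le_card hED)

theorem LinearIndependent.span_eq_top_iff_card_eq_finrank {K V ι : Type*} [DivisionRing K]
    [AddCommGroup V] [Module K V] [FiniteDimensional K V] [Fintype ι] {v : ι → V}
    (hv : LinearIndependent K v) :
    Submodule.span K (Set.range v) = ⊤ ↔ Fintype.card ι = Module.finrank K V :=
  ⟨fun hspan => by rw [← finrank_span_eq_card hv, hspan, finrank_top],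
    hv.span_eq_top_of_card_eq_finrank'⟩

namespace QPLip

variable {n m : ℕ} {A : Matrix (Fin m) (Fin n) ℝ} {D : Finset (Fin m)} {v : Fin n → ℝ}

theorem mem_coneOf_of_nonneg_on {lam : Fin m → ℝ} (hlam : ∀ i ∈ D, 0 ≤ lam i)
    (hv : v = ∑ i ∈ D, lam i • A i) : v ∈ coneOf A D :=
  ⟨fun i => max (lam i) 0, fun _ => le_max_right _ _, hv.trans <|
    Finset.sum_congr rfl fun i hi => congrArg (· • A i) (max_eq_left (hlam i hi)).symm⟩

theorem exists_erase_mem_coneOf_of_dependence {lam g : Fin m → ℝ} (hlam : ∀ i, 0 ≤ lam i)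
    (hv : v = ∑ i ∈ D, lam i • A i) (hg : ∑ i ∈ D, g i • A i = 0) {j₀ : Fin m}
    (hj₀ : j₀ ∈ D) (hgj₀ : 0 < g j₀) : ∃ j ∈ D, v ∈ coneOf A (D.erase j) := by
  -- Move along `-g` until the first multiplier reaches zero: `t = min {lam i / g i : g i > 0}`.
  obtain ⟨j, hjP, hjmin⟩ := (D.filter fun i => 0 < g i).exists_min_image (fun i => lam i / g i)
    ⟨j₀, Finset.mem_filter.2 ⟨hj₀, hgj₀⟩⟩
  obtain ⟨hjD, hgj⟩ := Finset.mem_filter.1 hjP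
  set t := lam j / g j
  have ht : 0 ≤ t := div_nonneg (hlam j) hgj.le
  have hnonneg : ∀ i ∈ D, 0 ≤ lam i - t * g i := by
    intro i hi
    rcases lt_or_ge 0 (g i) with hgi | hgi
    · have := hjmin i (Finset.mem_filter.2 ⟨hi, hgi⟩)
      rw [le_div_iff₀ hgi] at this
      linarith
    · linarith [hlam i, mul_nonpos_of_nonneg_of_nonpos ht hgi]
  have hsum : v = ∑ i ∈ D, (lam i - t * g i) • A i := by
    simp only [sub_smul, mul_smul, Finset.sum_sub_distrib, ← Finset.smul_sum, hg, smul_zero,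
      sub_zero, hv]
  have hj_zero : (lam j - t * g j) • A j = 0 := by
    rw [div_mul_cancel₀ _ hgj.ne', sub_self, zero_smul]
  refine ⟨j, hjD, mem_coneOf_of_nonneg_on
    (fun i hi => hnonneg i (Finset.mem_of_mem_erase hi)) ?_⟩
  exact hsum.trans (Finset.sum_erase D (f := fun i => (lam i - t * g i) • A i) hj_zero).symm

theorem exists_erase_mem_coneOf (hv : v ∈ coneOf A D)
    (hdep : ¬ LinearIndependent ℝ (fun i : D => A i.1)) :
    ∃ j ∈ D, v ∈ coneOf A (D.erase j) := by
  obtain ⟨lam, hlam, hv⟩ := hv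
  obtain ⟨g, hg, j, hjD, hgj⟩ := not_linearIndepOn_finset_iff.1 hdep
  rcases hgj.lt_or_gt with hneg | hpos
  · refine exists_erase_mem_coneOf_of_dependence hlam hv (g := -g) ?_ hjD (by simpa using hneg)
    simp only [Pi.neg_apply, neg_smul, Finset.sum_neg_distrib, hg, neg_zero]
  · exact exists_erase_mem_coneOf_of_dependence hlam hv hg hjD hpos

theorem linearIndependent_of_minimal_mem_coneOf {S : Set (Fin m)}
    (hD : Minimal (fun D : Finset (Fin m) => ↑D ⊆ S ∧ v ∈ coneOf A D) D) :
    LinearIndependent ℝ (fun i : D => A i.1) := by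
  by_contra hdep
  obtain ⟨j, hjD, hj⟩ := exists_erase_mem_coneOf hD.prop.2 hdep
  exact minimal_iff_forall_lt.1 hD |>.2 (Finset.erase_ssubset hjD)
    ⟨(Finset.coe_subset.2 (Finset.erase_subset j D)).trans hD.prop.1, hj⟩

theorem card_le_of_minimal_mem_coneOf {S : Set (Fin m)}
    (hD : Minimal (fun D : Finset (Fin m) => ↑D ⊆ S ∧ v ∈ coneOf A D) D) :
    D.card ≤ n := by
  simpa using (linearIndependent_of_minimal_mem_coneOf hD).fintype_card_le_finrank

theorem minKKT_eq_setOf_minimal (Q : Matrix (Fin n) (Fin n) ℝ) (c : Fin n → ℝ)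
    (b : Fin m → ℝ) (x : Fin n → ℝ) :
    MinKKT Q A c b x = {D | Minimal (fun D : Finset (Fin m) =>
      ↑D ⊆ activeIdx A b x ∧ -(Q.mulVec x + c) ∈ coneOf A D) D} := by
  ext D
  simp only [MinKKT, Set.mem_ofPred_eq, minimal_iff_forall_lt]
  exact ⟨fun ⟨hact, hv, hmin⟩ => ⟨⟨hact, hv⟩, fun E hE hPE => hmin E hE hPE.2⟩,
    fun ⟨⟨hact, hv⟩, hmin⟩ => ⟨hact, hv, fun E hE hvE =>
      hmin hE ⟨(Finset.coe_subset.2 hE.subset).trans hact, hvE⟩⟩⟩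

end QPLip

theorem statement1_general {n m : ℕ}
    (Q : Matrix (Fin n) (Fin n) ℝ)
    (A : Matrix (Fin m) (Fin n) ℝ) (c : Fin n → ℝ) (b : Fin m → ℝ) (x : Fin n → ℝ)
    (hSl : Slater A b) :
    (NCond Q A c b x ↔
      MinKKT Q A c b x =
        {D : Finset (Fin m) | ↑D ⊆ activeIdx A b x ∧
          -(Q.mulVec x + c) ∈ coneOf A D ∧ D.card = n}) ∧
    (NCond Q A c b x ↔
      MinKKT Q A c b x =
        {D : Finset (Fin m) | ↑D ⊆ activeIdx A b x ∧
          -(Q.mulVec x + c) ∈ coneOf A D ∧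
          LinearIndependent ℝ (fun i : D => A i.1) ∧
          Submodule.span ℝ (Set.range fun i : D => A i.1) = ⊤}) := by
  have hNC : NCond Q A c b x ↔ ∀ D : Finset (Fin m),
      ↑D ⊆ activeIdx A b x ∧ -(Q.mulVec x + c) ∈ coneOf A D → n ≤ D.card := by
    simp only [NCond, hSl, true_and, and_imp]
  have hchar := fun (cond : Finset (Fin m) → Prop) => forall_le_card_iff_setOf_minimal_eq
    (P := fun D => ↑D ⊆ activeIdx A b x ∧ -(Q.mulVec x + c) ∈ coneOf A D) (cond := cond)
    (fun _ => card_le_of_minimal_mem_coneOf)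
  have hbasis := hchar (fun D => LinearIndependent ℝ (fun i : D => A i.1) ∧
      Submodule.span ℝ (Set.range fun i : D => A i.1) = ⊤)
    (fun _ h => by
      simpa only [Fintype.card_coe, Module.finrank_fin_fun] using
        h.1.span_eq_top_iff_card_eq_finrank.1 h.2)
    (fun _ hD h => ⟨linearIndependent_of_minimal_mem_coneOf hD,
      (linearIndependent_of_minimal_mem_coneOf hD).span_eq_top_iff_card_eq_finrank.2
        (by simpa only [Fintype.card_coe, Module.finrank_fin_fun] using h)⟩)
  have hcard := hchar (·.card = n) (fun _ h => h) (fun _ _ h => h)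
  simpa only [hNC, minKKT_eq_setOf_minimal, and_assoc] using And.intro hcard hbasis

/-- under SCQ at `b`, the Nürnberger condition holds at `((c,b),x) ∈ gph S` iff
`M_{c,b}(x)` consists exactly of the subsets `D` of active indices with
`-(Qx+c) ∈ cone{aᵢ : i ∈ D}` and `|D| = n`; moreover `|D| = n` can be replaced by
`{aᵢ : i ∈ D}` being a basis of `ℝⁿ`. -/
theorem statement1 {n m : ℕ} (hn : 0 < n) (hm : 0 < m)
    (Q : Matrix (Fin n) (Fin n) ℝ) (hQ : Q.PosSemidef)
    (A : Matrix (Fin m) (Fin n) ℝ) (c : Fin n → ℝ) (b : Fin m → ℝ) (x : Fin n → ℝ)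
    (hx : x ∈ argminSet Q A c b) (hSl : Slater A b) :
    (NCond Q A c b x ↔
      MinKKT Q A c b x =
        {D : Finset (Fin m) | ↑D ⊆ activeIdx A b x ∧
          -(Q.mulVec x + c) ∈ coneOf A D ∧ D.card = n}) ∧
    (NCond Q A c b x ↔
      MinKKT Q A c b x =
        {D : Finset (Fin m) | ↑D ⊆ activeIdx A b x ∧
          -(Q.mulVec x + c) ∈ coneOf A D ∧
          LinearIndependent ℝ (fun i : D => A i.1) ∧
          Submodule.span ℝ (Set.range fun i : D => A i.1) = ⊤}) :=
  statement1_general Q A c b x hSl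
end

section
/- Let ((c̄,b̄),x̄) be in the graph of the argmin mapping S and let D ∈ M_{c̄,b̄}(x̄). Then S_D(c̄, b̄_D) = {x̄} if and only if the matrix M_D is nonsingular. -/
open Matrix Set Topology Filter
open scoped ENNReal

open QPLip

/-!
Minimality of `D` makes every KKT multiplier of `x̄` on `D` positive and the rows `aᵢ`, `i ∈ D`,
linearly independent: otherwise a ratio test along a dependence removes an index from `D`.
Positivity of the multipliers shows `S_D(c̄, b̄_D) = x̄ + (ker Q ∩ ker A_D)`. Independence of the
rows shows that `M_D` is nonsingular iff `ker Q ∩ ker A_D = 0`: if `Q u + A_Dᵀ w = 0` and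
`A_D u = 0`, then `uᵀ Q u = 0`, so `Q u = 0` by positive semidefiniteness, and then
`A_Dᵀ w = 0` forces `w = 0`.
-/

namespace QPLip

section KKTMatrix

variable {ι κ : Type*} [Fintype ι] [Fintype κ] [DecidableEq ι] [DecidableEq κ]

theorem isUnit_fromBlocks_transpose_iff {Q : Matrix κ κ ℝ} (hQ : Q.PosSemidef)
    {B : Matrix ι κ ℝ} (hB : LinearIndependent ℝ B.row) :
    IsUnit (fromBlocks Q Bᵀ B 0) ↔ ∀ u, Q *ᵥ u = 0 → B *ᵥ u = 0 → u = 0 := by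
  have hBt : Function.Injective Bᵀ.mulVec := by
    rwa [Matrix.mulVec_injective_iff, col_transpose]
  rw [← mulVec_injective_iff_isUnit, ← coe_mulVecLin, injective_iff_map_eq_zero]
  simp only [mulVecLin_apply]
  constructor
  · intro hM u hQu hBu
    have := hM (Sum.elim u 0) (by simp [fromBlocks_mulVec, hQu, hBu])
    simpa using congrArg (· ∘ Sum.inl) this
  · intro hker z hz
    set u := z ∘ Sum.inl
    set w := z ∘ Sum.inr
    rw [fromBlocks_mulVec, ← Sum.elim_zero_zero, Sum.elim_eq_iff, zero_mulVec, add_zero] at hz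
    obtain ⟨hQB, hBu⟩ : Q *ᵥ u + Bᵀ *ᵥ w = 0 ∧ B *ᵥ u = 0 := hz
    -- `uᵀQu = -uᵀBᵀw = -(Bu)ᵀw = 0`
    have hquad : star u ⬝ᵥ Q *ᵥ u = 0 := by
      have := congrArg (u ⬝ᵥ ·) hQB
      simp only [dotProduct_add, dotProduct_zero, dotProduct_mulVec u Bᵀ, vecMul_transpose,
        hBu, zero_dotProduct, add_zero] at this
      simpa using this
    have hQu : Q *ᵥ u = 0 := (hQ.dotProduct_mulVec_zero_iff u).mp hquad
    have hw : w = 0 := hBt (by rwa [hQu, zero_add, ← mulVec_zero Bᵀ] at hQB)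
    rw [← Sum.elim_comp_inl_inr z, ← Sum.elim_zero_zero]
    exact congrArg₂ Sum.elim (hker u hQu hBu) hw

end KKTMatrix

theorem exists_add_smul_nonneg_eq_zero {ι : Type*} {s : Finset ι} {lam w : ι → ℝ}
    (hlam : ∀ i ∈ s, 0 ≤ lam i) (hw : ∃ i ∈ s, w i < 0) :
    ∃ t : ℝ, (∀ i ∈ s, 0 ≤ lam i + t * w i) ∧ ∃ j ∈ s, lam j + t * w j = 0 := by
  obtain ⟨j, hj, hjmin⟩ := (s.filter (w · < 0)).exists_min_image (fun i => lam i / -w i)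
    (by simpa [Finset.filter_nonempty_iff] using hw)
  obtain ⟨hjs, hwj⟩ := Finset.mem_filter.mp hj
  have ht : 0 ≤ lam j / -w j := div_nonneg (hlam j hjs) (neg_pos.mpr hwj).le
  refine ⟨lam j / -w j, fun i hi => ?_, j, hjs, ?_⟩
  · rcases lt_or_ge (w i) 0 with hwi | hwi
    · have := (le_div_iff₀ (neg_pos.mpr hwi)).mp (hjmin i (Finset.mem_filter.mpr ⟨hi, hwi⟩))
      linarith
    · nlinarith [hlam i hi, mul_nonneg ht hwi]
  · rw [div_neg, neg_mul, div_mul_cancel₀ _ hwj.ne, add_neg_cancel]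

section Cone

variable {n m : ℕ} {A : Matrix (Fin m) (Fin n) ℝ} {D : Finset (Fin m)} {lam : Fin m → ℝ}

theorem sum_smul_mem_coneOf_erase {μ : Fin m → ℝ} (hμ : ∀ i ∈ D, 0 ≤ μ i) {j : Fin m}
    (hj : μ j = 0) : ∑ i ∈ D, μ i • A i ∈ coneOf A (D.erase j) := by
  refine ⟨fun i => max (μ i) 0, fun i => le_max_right _ _, ?_⟩
  rw [← Finset.sum_erase D (by rw [hj, zero_smul])]
  refine Finset.sum_congr rfl fun i hi => ?_
  dsimp only
  rw [max_eq_left (hμ i (Finset.mem_of_mem_erase hi))]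

theorem pos_of_forall_notMem_coneOf_ssubset (hlam : ∀ i ∈ D, 0 ≤ lam i)
    (hmin : ∀ D' ⊂ D, ∑ i ∈ D, lam i • A i ∉ coneOf A D') : ∀ i ∈ D, 0 < lam i := by
  intro i hi
  refine (hlam i hi).lt_of_ne fun h => ?_
  exact hmin _ (Finset.erase_ssubset hi) (sum_smul_mem_coneOf_erase hlam h.symm)

theorem linearIndepOn_of_forall_notMem_coneOf_ssubset (hlam : ∀ i ∈ D, 0 ≤ lam i)
    (hmin : ∀ D' ⊂ D, ∑ i ∈ D, lam i • A i ∉ coneOf A D') : LinearIndepOn ℝ A.row D := by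
  by_contra hdep
  obtain ⟨w, hw, i, hi, hwi⟩ := not_linearIndepOn_finset_iff.mp hdep
  obtain ⟨v, hv, hvi⟩ : ∃ v : Fin m → ℝ, ∑ i ∈ D, v i • A i = 0 ∧ v i < 0 := by
    rcases hwi.lt_or_gt with hneg | hpos
    · exact ⟨w, hw, hneg⟩
    · refine ⟨-w, ?_, neg_lt_zero.mpr hpos⟩
      simpa only [Pi.neg_apply, neg_smul, Finset.sum_neg_distrib, neg_eq_zero]
  obtain ⟨t, ht, j, hj, htj⟩ := exists_add_smul_nonneg_eq_zero hlam ⟨i, hi, hvi⟩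
  have hshift : ∑ i ∈ D, (lam i + t * v i) • A i = ∑ i ∈ D, lam i • A i := by
    simp only [add_smul, mul_smul, Finset.sum_add_distrib, ← Finset.smul_sum, hv, smul_zero,
      add_zero]
  exact hmin _ (Finset.erase_ssubset hj) (hshift ▸ sum_smul_mem_coneOf_erase ht htj)

end Cone

section Subproblem

variable {n m : ℕ} {Q : Matrix (Fin n) (Fin n) ℝ} {A : Matrix (Fin m) (Fin n) ℝ}
  {D : Finset (Fin m)} {c x : Fin n → ℝ} {b : Fin m → ℝ} {lam : Fin m → ℝ}

theorem obj_add (hQ : Q.IsSymm) (c x u : Fin n → ℝ) :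
    obj Q c (x + u) = obj Q c x + (Q *ᵥ x + c) ⬝ᵥ u + 1 / 2 * (u ⬝ᵥ Q *ᵥ u) := by
  have hxu : x ⬝ᵥ Q *ᵥ u = u ⬝ᵥ Q *ᵥ x := by
    rw [dotProduct_mulVec, ← hQ.eq, vecMul_transpose, dotProduct_comm, hQ.eq]
  simp only [obj, mulVec_add, dotProduct_add, add_dotProduct, dotProduct_comm (Q *ᵥ x) u, hxu]
  ring

theorem subA_mulVec_eq_zero_iff {u : Fin n → ℝ} :
    subA A D *ᵥ u = 0 ↔ ∀ i ∈ D, A i ⬝ᵥ u = 0 :=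
  ⟨fun h i hi => congrFun h ⟨i, hi⟩, fun h => funext fun i => h i i.2⟩

theorem mem_feasD_restr_iff (hact : ↑D ⊆ activeIdx A b x) {y : Fin n → ℝ} :
    y ∈ FeasD A D (restr b D) ↔ ∀ i ∈ D, A i ⬝ᵥ (y - x) ≤ 0 := by
  simp only [FeasD, restr, Subtype.forall, dotProduct_sub, sub_nonpos]
  exact forall₂_congr fun i hi => by rw [show A i ⬝ᵥ x = b i from hact hi]

theorem gradient_dotProduct (hgrad : -(Q *ᵥ x + c) = ∑ i ∈ D, lam i • A i) (u : Fin n → ℝ) :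
    (Q *ᵥ x + c) ⬝ᵥ u = -∑ i ∈ D, lam i * (A i ⬝ᵥ u) := by
  rw [← neg_neg (Q *ᵥ x + c), hgrad, neg_dotProduct, sum_dotProduct]
  simp only [smul_dotProduct, smul_eq_mul]

theorem gradient_dotProduct_nonneg (hgrad : -(Q *ᵥ x + c) = ∑ i ∈ D, lam i • A i)
    (hlam : ∀ i ∈ D, 0 ≤ lam i) {u : Fin n → ℝ} (hu : ∀ i ∈ D, A i ⬝ᵥ u ≤ 0) :
    0 ≤ (Q *ᵥ x + c) ⬝ᵥ u := by
  rw [gradient_dotProduct hgrad, neg_nonneg]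
  exact Finset.sum_nonpos fun i hi => mul_nonpos_of_nonneg_of_nonpos (hlam i hi) (hu i hi)

theorem mem_argminD (hQ : Q.PosSemidef) (hlam : ∀ i ∈ D, 0 ≤ lam i)
    (hgrad : -(Q *ᵥ x + c) = ∑ i ∈ D, lam i • A i) (hact : ↑D ⊆ activeIdx A b x) :
    x ∈ argminD Q A D c (restr b D) := by
  refine ⟨(mem_feasD_restr_iff hact).mpr fun i _ => by simp, fun y hy => ?_⟩
  rw [← add_sub_cancel x y, obj_add (isHermitian_iff_isSymm.mp hQ.isHermitian)]
  have hgrad_nonneg := gradient_dotProduct_nonneg hgrad hlam ((mem_feasD_restr_iff hact).mp hy)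
  have hquad_nonneg : 0 ≤ (y - x) ⬝ᵥ Q *ᵥ (y - x) := by
    simpa using hQ.dotProduct_mulVec_nonneg (y - x)
  linarith

theorem mem_argminD_iff (hQ : Q.PosSemidef) (hlam : ∀ i ∈ D, 0 < lam i)
    (hgrad : -(Q *ᵥ x + c) = ∑ i ∈ D, lam i • A i) (hact : ↑D ⊆ activeIdx A b x)
    {y : Fin n → ℝ} :
    y ∈ argminD Q A D c (restr b D) ↔ Q *ᵥ (y - x) = 0 ∧ subA A D *ᵥ (y - x) = 0 := by
  have hx := mem_argminD hQ (fun i hi => (hlam i hi).le) hgrad hact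
  have hobj := obj_add (isHermitian_iff_isSymm.mp hQ.isHermitian) c x (y - x)
  rw [add_sub_cancel] at hobj
  rw [subA_mulVec_eq_zero_iff]
  constructor
  · rintro ⟨hy, hymin⟩
    have hfeas := (mem_feasD_restr_iff hact).mp hy
    have hgrad_nonneg := gradient_dotProduct_nonneg hgrad (fun i hi => (hlam i hi).le) hfeas
    have hquad_nonneg : 0 ≤ (y - x) ⬝ᵥ Q *ᵥ (y - x) := by
      simpa using hQ.dotProduct_mulVec_nonneg (y - x)
    have hle := hymin x hx.1
    -- `obj y ≤ obj x` forces both nonnegative terms of `obj y - obj x` to vanish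
    have hquad : (y - x) ⬝ᵥ Q *ᵥ (y - x) = 0 := by linarith
    have hgrad0 : (Q *ᵥ x + c) ⬝ᵥ (y - x) = 0 := by linarith
    have hsum : ∑ i ∈ D, lam i * (A i ⬝ᵥ (y - x)) = 0 := by
      rwa [gradient_dotProduct hgrad, neg_eq_zero] at hgrad0
    refine ⟨(hQ.dotProduct_mulVec_zero_iff _).mp (by simpa using hquad), fun i hi => ?_⟩
    have := (Finset.sum_eq_zero_iff_of_nonpos fun i hi =>
      mul_nonpos_of_nonneg_of_nonpos (hlam i hi).le (hfeas i hi)).mp hsum i hi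
    exact (mul_eq_zero.mp this).resolve_left (hlam i hi).ne'
  · rintro ⟨hQu, hAu⟩
    refine ⟨(mem_feasD_restr_iff hact).mpr fun i hi => (hAu i hi).le, fun z hz => ?_⟩
    have hgrad0 : (Q *ᵥ x + c) ⬝ᵥ (y - x) = 0 := by
      rw [gradient_dotProduct hgrad, Finset.sum_eq_zero fun i hi => by rw [hAu i hi, mul_zero],
        neg_zero]
    rw [hobj, hgrad0, hQu, dotProduct_zero, mul_zero, add_zero, add_zero]
    exact hx.2 z hz

end Subproblem

end QPLip

theorem statement3_general {n m : ℕ}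
    (Q : Matrix (Fin n) (Fin n) ℝ) (hQ : Q.PosSemidef)
    (A : Matrix (Fin m) (Fin n) ℝ) (cb : Fin n → ℝ) (bb : Fin m → ℝ) (xb : Fin n → ℝ)
    (D : Finset (Fin m)) (hD : D ∈ MinKKT Q A cb bb xb) :
    argminD Q A D cb (restr bb D) = {xb} ↔ IsUnit (MD Q A D) := by
  obtain ⟨hact, ⟨lam, hlam, hgrad⟩, hmin⟩ := hD
  rw [hgrad] at hmin
  have hpos := pos_of_forall_notMem_coneOf_ssubset (fun i _ => hlam i) hmin
  have hind := linearIndepOn_of_forall_notMem_coneOf_ssubset (fun i _ => hlam i) hmin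
  rw [MD, isUnit_fromBlocks_transpose_iff (B := subA A D) hQ hind, Set.ext_iff]
  simp only [mem_argminD_iff hQ hpos hgrad hact, Set.mem_singleton_iff]
  constructor
  · intro h u hQu hAu
    simpa using (h (xb + u)).mp (by simpa using ⟨hQu, hAu⟩)
  · intro h y
    rw [← sub_eq_zero (a := y)]
    exact ⟨fun ⟨hQu, hAu⟩ => h _ hQu hAu, fun h0 => by simp [h0]⟩

/-- for `((c̄,b̄),x̄) ∈ gph S` and `D ∈ M_{c̄,b̄}(x̄)`, one has
`S_D(c̄, b̄_D) = {x̄}` iff the matrix `M_D` is nonsingular. -/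
theorem statement3 {n m : ℕ} (hn : 0 < n) (hm : 0 < m)
    (Q : Matrix (Fin n) (Fin n) ℝ) (hQ : Q.PosSemidef)
    (A : Matrix (Fin m) (Fin n) ℝ) (cb : Fin n → ℝ) (bb : Fin m → ℝ) (xb : Fin n → ℝ)
    (hx : xb ∈ argminSet Q A cb bb) (D : Finset (Fin m)) (hD : D ∈ MinKKT Q A cb bb xb) :
    argminD Q A D cb (restr bb D) = {xb} ↔ IsUnit (MD Q A D) :=
  statement3_general Q hQ A cb bb xb D hD
end

section
/- Let ((c̄,b̄),x̄) be in the graph of the argmin mapping S, let D ∈ M_{c̄,b̄}(x̄), and assume that the matrix M_D is nonsingular. Then there exists a neighborhood V of (c̄, b̄_D) in ℝ^n × ℝ^D such that for every (c,β) ∈ V the set S_D(c,β) is the singleton {(I_n | 0_{n×|D|}) M_D^{−1} (−c; β)}, where (−c; β) denotes the column vector in ℝ^{n+|D|} stacking −c over β. In particular, S_D is strongly Lipschitz stable, and hence has the Aubin property, at ((c̄,b̄_D),x̄). -/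
open Matrix Set Topology Filter
open scoped ENNReal

open QPLip


/-!
Minimality of `D` forces every multiplier of the KKT representation of `-(Q x̄ + c̄)` on
`{aᵢ : i ∈ D}` to be positive. Since `M_D` is invertible, `(x, λ) = M_D⁻¹ (-c; β)` is the unique
solution of the KKT equations `Q x + A_Dᵀ λ = -c`, `A_D x = β`; it depends linearly on `(c, β)`
and equals `(x̄, λ̄)` at `(c̄, b̄_D)`, so `λ` stays positive nearby. For a convex quadratic program,
a KKT point with `λ ≥ 0` is a minimizer, and with `λ > 0` complementary slackness together with
the invertibility of `M_D` makes it the only one. Lipschitz continuity of the linear solution map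
for the mixed parameter distance follows from the equivalence of norms on `ℝⁿ`.
-/

namespace QPLip

lemma norm_sumElim_le {ι κ : Type*} [Fintype ι] [Fintype κ] (a : ι → ℝ) (b : κ → ℝ) :
    ‖(Sum.elim a b : ι ⊕ κ → ℝ)‖ ≤ max ‖a‖ ‖b‖ := by
  refine (pi_norm_le_iff_of_nonneg (le_max_of_le_left (norm_nonneg _))).2 ?_
  rintro (i | j)
  · exact le_max_of_le_left (norm_le_pi_norm a i)
  · exact le_max_of_le_right (norm_le_pi_norm b j)

namespace IsNorm

variable {n : ℕ} {nrm : (Fin n → ℝ) → ℝ}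

lemma map_zero (h : IsNorm nrm) : nrm 0 = 0 := by
  simpa using h.smul 0 0

lemma map_neg (h : IsNorm nrm) (x : Fin n → ℝ) : nrm (-x) = nrm x := by
  simpa using h.smul (-1) x

lemma nonneg (h : IsNorm nrm) (x : Fin n → ℝ) : 0 ≤ nrm x := by
  have := h.triangle x (-x)
  rw [add_neg_cancel, h.map_zero, h.map_neg] at this
  linarith

lemma pos_of_ne_zero (h : IsNorm nrm) {x : Fin n → ℝ} (hx : x ≠ 0) : 0 < nrm x :=
  (h.nonneg x).lt_of_ne' (mt (h.definite x) hx)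

lemma abs_sub_le (h : IsNorm nrm) (x y : Fin n → ℝ) : |nrm x - nrm y| ≤ nrm (x - y) := by
  have hx : nrm x ≤ nrm (x - y) + nrm y := by simpa using h.triangle (x - y) y
  have hy : nrm y ≤ nrm (y - x) + nrm x := by simpa using h.triangle (y - x) x
  rw [← neg_sub, h.map_neg] at hy
  exact abs_sub_le_iff.2 ⟨by linarith, by linarith⟩

lemma exists_le_mul_norm (h : IsNorm nrm) : ∃ C, 0 ≤ C ∧ ∀ x, nrm x ≤ C * ‖x‖ := by
  refine ⟨∑ j, nrm (Pi.single j 1), Finset.sum_nonneg fun j _ => h.nonneg _, fun x => ?_⟩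
  have hsingle : ∀ j, Pi.single j (x j) = x j • (Pi.single j 1 : Fin n → ℝ) := fun j => by
    rw [← Pi.single_smul, smul_eq_mul, mul_one]
  calc nrm x = nrm (∑ j, Pi.single j (x j)) := by rw [Finset.univ_sum_single]
    _ ≤ ∑ j, |x j| * nrm (Pi.single j 1) := by
        refine (Finset.le_sum_of_subadditive nrm h.map_zero.le h.triangle _ _).trans_eq ?_
        simp only [hsingle, h.smul]
    _ ≤ ∑ j, ‖x‖ * nrm (Pi.single j 1) := by
        gcongr with j
        · exact h.nonneg _
        · exact norm_le_pi_norm x j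
    _ = (∑ j, nrm (Pi.single j 1)) * ‖x‖ := by rw [← Finset.mul_sum, mul_comm]

lemma continuous (h : IsNorm nrm) : Continuous nrm := by
  obtain ⟨C, hC, hle⟩ := h.exists_le_mul_norm
  refine (LipschitzWith.of_dist_le_mul (K := C.toNNReal) fun x y => ?_).continuous
  rw [Real.dist_eq, dist_eq_norm, Real.coe_toNNReal _ hC]
  exact (h.abs_sub_le x y).trans (hle _)

/-- `nrm` attains a positive minimum on the compact unit sphere of the sup norm. -/
lemma exists_pos_mul_norm_le (h : IsNorm nrm) : ∃ α, 0 < α ∧ ∀ x, α * ‖x‖ ≤ nrm x := by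
  obtain ⟨α, hα, hsphere⟩ := (isCompact_sphere (0 : Fin n → ℝ) 1).exists_forall_le'
    h.continuous.continuousOn (a := 0) fun x hx => h.pos_of_ne_zero
      (ne_zero_of_mem_sphere one_ne_zero ⟨x, hx⟩)
  refine ⟨α, hα, fun x => ?_⟩
  rcases eq_or_ne x 0 with rfl | hx
  · simp [h.map_zero]
  have hpos : 0 < ‖x‖ := norm_pos_iff.2 hx
  have := hsphere (‖x‖⁻¹ • x) (by simp [norm_smul, hpos.ne'])
  rwa [h.smul, abs_of_pos (inv_pos.2 hpos), le_inv_mul_iff₀ hpos, mul_comm] at this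

lemma bddAbove_dual (h : IsNorm nrm) (c : Fin n → ℝ) :
    BddAbove {r | ∃ y, nrm y ≤ 1 ∧ r = |c ⬝ᵥ y|} := by
  obtain ⟨α, hα, hlow⟩ := h.exists_pos_mul_norm_le
  refine ⟨(∑ i, |c i|) * α⁻¹, ?_⟩
  rintro r ⟨y, hy, rfl⟩
  have hy' : ‖y‖ ≤ α⁻¹ := by
    rw [← one_div, le_div_iff₀ hα]
    linarith [hlow y]
  calc |c ⬝ᵥ y| ≤ ∑ i, |c i| * |y i| :=
        (Finset.abs_sum_le_sum_abs _ _).trans_eq (by simp only [abs_mul])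
    _ ≤ ∑ i, |c i| * α⁻¹ := by
        gcongr with i
        exact (norm_le_pi_norm y i).trans hy'
    _ = (∑ i, |c i|) * α⁻¹ := by rw [Finset.sum_mul]

lemma dualNrm_nonneg (h : IsNorm nrm) (c : Fin n → ℝ) : 0 ≤ dualNrm nrm c :=
  le_csSup (h.bddAbove_dual c) ⟨0, by rw [h.map_zero]; exact zero_le_one, by simp⟩

lemma abs_dotProduct_le (h : IsNorm nrm) (c y : Fin n → ℝ) :
    |c ⬝ᵥ y| ≤ dualNrm nrm c * nrm y := by
  rcases eq_or_ne y 0 with rfl | hy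
  · simp [h.map_zero]
  have hpos := h.pos_of_ne_zero hy
  rw [← div_le_iff₀ hpos]
  refine le_csSup (h.bddAbove_dual c) ⟨(nrm y)⁻¹ • y, ?_, ?_⟩
  · rw [h.smul, abs_of_pos (inv_pos.2 hpos), inv_mul_cancel₀ hpos.ne']
  · rw [dotProduct_smul, smul_eq_mul, abs_mul, abs_of_pos (inv_pos.2 hpos), div_eq_inv_mul]

lemma exists_norm_le_mul_dualNrm (h : IsNorm nrm) :
    ∃ C, 0 ≤ C ∧ ∀ c, ‖c‖ ≤ C * dualNrm nrm c := by
  obtain ⟨C, hC, hle⟩ := h.exists_le_mul_norm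
  refine ⟨C, hC, fun c => ?_⟩
  refine (pi_norm_le_iff_of_nonneg (mul_nonneg hC (h.dualNrm_nonneg c))).2 fun j => ?_
  calc ‖c j‖ = |c ⬝ᵥ Pi.single j 1| := by simp [dotProduct_single]
    _ ≤ dualNrm nrm c * nrm (Pi.single j 1) := h.abs_dotProduct_le c _
    _ ≤ dualNrm nrm c * C := by
        gcongr
        · exact h.dualNrm_nonneg c
        · simpa [Pi.norm_single] using hle (Pi.single j 1)
    _ = C * dualNrm nrm c := mul_comm _ _

lemma exists_lipschitz_mulVec_sumElim (h : IsNorm nrm) {ι : Type} [Fintype ι]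
    (B : Matrix (Fin n) (Fin n ⊕ ι) ℝ) :
    ∃ κ, 0 ≤ κ ∧ ∀ p q : (Fin n → ℝ) × (ι → ℝ),
      nrm (B *ᵥ Sum.elim (-p.1) p.2 - B *ᵥ Sum.elim (-q.1) q.2) ≤ κ * pDist nrm p q := by
  obtain ⟨C₁, hC₁, h₁⟩ := h.exists_le_mul_norm
  obtain ⟨C₂, hC₂, h₂⟩ := h.exists_norm_le_mul_dualNrm
  set T := LinearMap.toContinuousLinearMap B.mulVecLin
  refine ⟨C₁ * ‖T‖ * max C₂ 1, by positivity, fun p q => ?_⟩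
  have hdiff : Sum.elim (-p.1) p.2 - Sum.elim (-q.1) q.2 = Sum.elim (-(p.1 - q.1)) (p.2 - q.2) := by
    ext (i | i) <;> simp [sub_eq_add_neg, add_comm]
  set w := Sum.elim (-(p.1 - q.1)) (p.2 - q.2)
  have hw : ‖w‖ ≤ max C₂ 1 * pDist nrm p q := by
    have hd := h.dualNrm_nonneg (p.1 - q.1)
    refine (norm_sumElim_le _ _).trans (max_le ?_ ?_)
    · calc ‖-(p.1 - q.1)‖ ≤ C₂ * dualNrm nrm (p.1 - q.1) := by rw [norm_neg]; exact h₂ _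
        _ ≤ max C₂ 1 * pDist nrm p q := by
          gcongr
          · exact le_max_left _ _
          · exact le_max_left _ _
    · calc ‖p.2 - q.2‖ = 1 * ‖p.2 - q.2‖ := (one_mul _).symm
        _ ≤ max C₂ 1 * pDist nrm p q := by
          gcongr
          · exact le_max_right _ _
          · exact le_max_right _ _
  calc nrm (B *ᵥ Sum.elim (-p.1) p.2 - B *ᵥ Sum.elim (-q.1) q.2) = nrm (T w) := by
        rw [← mulVec_sub, hdiff]; rfl
    _ ≤ C₁ * (‖T‖ * ‖w‖) := (h₁ _).trans (by gcongr; exact T.le_opNorm w)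
    _ ≤ C₁ * (‖T‖ * (max C₂ 1 * pDist nrm p q)) := by gcongr
    _ = C₁ * ‖T‖ * max C₂ 1 * pDist nrm p q := by ring

end IsNorm

section KKT

variable {n : ℕ} {ι : Type*} [Fintype ι] {Q : Matrix (Fin n) (Fin n) ℝ}
  {G : Matrix ι (Fin n) ℝ} {c x y : Fin n → ℝ} {β μ : ι → ℝ}

lemma obj_sub_obj (hQ : Q.IsSymm) (c x y : Fin n → ℝ) :
    obj Q c y - obj Q c x = 1 / 2 * ((y - x) ⬝ᵥ Q *ᵥ (y - x)) + (Q *ᵥ x + c) ⬝ᵥ (y - x) := by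
  have hxy : x ⬝ᵥ Q *ᵥ y = y ⬝ᵥ Q *ᵥ x := by
    rw [dotProduct_mulVec, ← mulVec_transpose, hQ.eq, dotProduct_comm]
  simp only [obj, mulVec_sub, dotProduct_sub, sub_dotProduct, add_dotProduct]
  linarith [dotProduct_comm (Q *ᵥ x) y, dotProduct_comm (Q *ᵥ x) x]

lemma obj_sub_obj_of_kkt (hQ : Q.IsSymm) (hstat : Q *ᵥ x + Gᵀ *ᵥ μ = -c) (hact : G *ᵥ x = β)
    (y : Fin n → ℝ) :
    obj Q c y - obj Q c x = 1 / 2 * ((y - x) ⬝ᵥ Q *ᵥ (y - x)) + μ ⬝ᵥ (β - G *ᵥ y) := by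
  have hgrad : Q *ᵥ x + c = -(Gᵀ *ᵥ μ) := by
    rw [eq_neg_iff_add_eq_zero, add_right_comm, hstat, neg_add_cancel]
  rw [obj_sub_obj hQ, hgrad, neg_dotProduct, mulVec_transpose, ← dotProduct_mulVec,
    mulVec_sub G, hact, ← dotProduct_neg, neg_sub]

lemma dotProduct_eq_zero_iff_of_pos (hμ : ∀ i, 0 < μ i) {v : ι → ℝ} (hv : 0 ≤ v) :
    μ ⬝ᵥ v = 0 ↔ v = 0 := by
  refine ⟨fun h => funext fun i => ?_, fun h => h ▸ dotProduct_zero μ⟩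
  have := (Finset.sum_eq_zero_iff_of_nonneg fun i _ => mul_nonneg (hμ i).le (hv i)).1 h i
    (Finset.mem_univ i)
  exact (mul_eq_zero.1 this).resolve_left (hμ i).ne'

lemma obj_le_of_kkt (hQ : Q.PosSemidef) (hstat : Q *ᵥ x + Gᵀ *ᵥ μ = -c) (hact : G *ᵥ x = β)
    (hμ : 0 ≤ μ) (hy : G *ᵥ y ≤ β) : obj Q c x ≤ obj Q c y := by
  have hgap := obj_sub_obj_of_kkt (isHermitian_iff_isSymm.1 hQ.1) hstat hact y
  have hcurv : 0 ≤ (y - x) ⬝ᵥ Q *ᵥ (y - x) := by simpa using hQ.dotProduct_mulVec_nonneg (y - x)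
  have hslack : 0 ≤ μ ⬝ᵥ (β - G *ᵥ y) := dotProduct_nonneg_of_nonneg hμ (sub_nonneg.2 hy)
  linarith

lemma eq_of_kkt_of_obj_le [DecidableEq ι] (hQ : Q.PosSemidef) (hM : IsUnit (fromBlocks Q Gᵀ G 0))
    (hstat : Q *ᵥ x + Gᵀ *ᵥ μ = -c) (hact : G *ᵥ x = β) (hμ : ∀ i, 0 < μ i)
    (hy : G *ᵥ y ≤ β) (hle : obj Q c y ≤ obj Q c x) : y = x := by
  have hgap := obj_sub_obj_of_kkt (isHermitian_iff_isSymm.1 hQ.1) hstat hact y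
  have hcurv : 0 ≤ (y - x) ⬝ᵥ Q *ᵥ (y - x) := by simpa using hQ.dotProduct_mulVec_nonneg (y - x)
  have hslack : 0 ≤ μ ⬝ᵥ (β - G *ᵥ y) :=
    dotProduct_nonneg_of_nonneg (fun i => (hμ i).le) (sub_nonneg.2 hy)
  have hQd : Q *ᵥ (y - x) = 0 :=
    (hQ.dotProduct_mulVec_zero_iff (y - x)).1 (by simp only [star_trivial]; linarith)
  have hGy : G *ᵥ y = β :=
    (sub_eq_zero.1 ((dotProduct_eq_zero_iff_of_pos hμ (sub_nonneg.2 hy)).1 (by linarith))).symm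
  have hGd : G *ᵥ (y - x) = 0 := by rw [mulVec_sub, hGy, hact, sub_self]
  have hker : fromBlocks Q Gᵀ G 0 *ᵥ Sum.elim (y - x) 0 = 0 := by
    rw [fromBlocks_mulVec]
    simp [hQd, hGd]
  have hw := mulVec_injective_iff_isUnit.2 hM (hker.trans (mulVec_zero _).symm)
  funext j
  simpa [sub_eq_zero] using congrFun hw (.inl j)

end KKT

section SubProblem

variable {n m : ℕ} {Q : Matrix (Fin n) (Fin n) ℝ} {A : Matrix (Fin m) (Fin n) ℝ}
  {D : Finset (Fin m)}

lemma mem_FeasD_iff {β : D → ℝ} {x : Fin n → ℝ} : x ∈ FeasD A D β ↔ subA A D *ᵥ x ≤ β :=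
  Iff.rfl

lemma MD_mulVec_sumElim (x : Fin n → ℝ) (μ : D → ℝ) :
    MD Q A D *ᵥ Sum.elim x μ = Sum.elim (Q *ᵥ x + (subA A D)ᵀ *ᵥ μ) (subA A D *ᵥ x) := by
  simp [MD, fromBlocks_mulVec]

lemma projMat_mulVec (w : Fin n ⊕ D → ℝ) : projMat n D *ᵥ w = w ∘ Sum.inl := by
  rw [projMat, ← Sum.elim_comp_inl_inr w, fromCols_mulVec_sumElim, one_mulVec, zero_mulVec,
    add_zero, Sum.elim_comp_inl_inr]

lemma argminD_eq_singleton_of_kkt (hQ : Q.PosSemidef) (hM : IsUnit (MD Q A D))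
    {c x : Fin n → ℝ} {β μ : D → ℝ} (hstat : Q *ᵥ x + (subA A D)ᵀ *ᵥ μ = -c)
    (hact : subA A D *ᵥ x = β) (hμ : ∀ i, 0 < μ i) : argminD Q A D c β = {x} := by
  ext y
  simp only [argminD, mem_FeasD_iff, Set.mem_ofPred_eq, Set.mem_singleton_iff]
  constructor
  · rintro ⟨hy, hmin⟩
    exact eq_of_kkt_of_obj_le hQ hM hstat hact hμ hy (hmin x hact.le)
  · rintro rfl
    exact ⟨hact.le, fun z hz => obj_le_of_kkt hQ hstat hact (fun i => (hμ i).le) hz⟩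

lemma argminD_eq_singleton (hQ : Q.PosSemidef) (hM : IsUnit (MD Q A D)) {c : Fin n → ℝ}
    {β : D → ℝ} (hpos : ∀ i, 0 < ((MD Q A D)⁻¹ *ᵥ Sum.elim (-c) β) (Sum.inr i)) :
    argminD Q A D c β = {(projMat n D * (MD Q A D)⁻¹) *ᵥ Sum.elim (-c) β} := by
  set z := (MD Q A D)⁻¹ *ᵥ Sum.elim (-c) β
  have hz : MD Q A D *ᵥ z = Sum.elim (-c) β := by
    rw [mulVec_mulVec, mul_nonsing_inv _ ((isUnit_iff_isUnit_det _).1 hM), one_mulVec]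
  rw [← Sum.elim_comp_inl_inr z, MD_mulVec_sumElim, Sum.elim_eq_iff] at hz
  rw [← mulVec_mulVec, projMat_mulVec]
  exact argminD_eq_singleton_of_kkt hQ hM hz.1 hz.2 hpos

/-- An index with zero multiplier could be dropped, contradicting the minimality of `D`. -/
lemma pos_of_mem_MinKKT {c : Fin n → ℝ} {b : Fin m → ℝ} {x : Fin n → ℝ}
    (hD : D ∈ MinKKT Q A c b x) {μ : Fin m → ℝ} (hμ : ∀ i, 0 ≤ μ i)
    (hsum : -(Q *ᵥ x + c) = ∑ i ∈ D, μ i • A i) {i : Fin m} (hi : i ∈ D) : 0 < μ i := by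
  refine (hμ i).lt_of_ne fun h0 => hD.2.2 (D.erase i) (Finset.erase_ssubset hi) ⟨μ, hμ, ?_⟩
  rw [hsum, Finset.sum_erase _ (by rw [← h0, zero_smul])]

lemma subA_transpose_mulVec (μ : D → ℝ) : (subA A D)ᵀ *ᵥ μ = ∑ i : D, μ i • A i := by
  ext j
  simp [mulVec, dotProduct, subA, mul_comm]

lemma exists_kkt_of_mem_MinKKT {c : Fin n → ℝ} {b : Fin m → ℝ} {x : Fin n → ℝ}
    (hD : D ∈ MinKKT Q A c b x) :
    ∃ μ : D → ℝ, (∀ i, 0 < μ i) ∧ MD Q A D *ᵥ Sum.elim x μ = Sum.elim (-c) (restr b D) := by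
  obtain ⟨μ, hμ, hsum⟩ := hD.2.1
  refine ⟨fun i => μ i, fun i => pos_of_mem_MinKKT hD hμ hsum i.2, ?_⟩
  rw [MD_mulVec_sumElim, Sum.elim_eq_iff]
  refine ⟨?_, funext fun i => hD.1 i.2⟩
  rw [subA_transpose_mulVec, Finset.sum_coe_sort D fun i => μ i • A i, ← hsum]
  abel

theorem eventually_argminD_eq_singleton (hQ : Q.PosSemidef) {c : Fin n → ℝ} {b : Fin m → ℝ}
    {x : Fin n → ℝ} (hD : D ∈ MinKKT Q A c b x) (hM : IsUnit (MD Q A D)) :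
    ∀ᶠ p in 𝓝 ((c, restr b D) : (Fin n → ℝ) × (D → ℝ)),
      argminD Q A D p.1 p.2 = {(projMat n D * (MD Q A D)⁻¹) *ᵥ Sum.elim (-p.1) p.2} := by
  obtain ⟨μ, hμ, hkkt⟩ := exists_kkt_of_mem_MinKKT hD
  have hsol : (MD Q A D)⁻¹ *ᵥ Sum.elim (-c) (restr b D) = Sum.elim x μ := by
    rw [← hkkt, mulVec_mulVec, nonsing_inv_mul _ ((isUnit_iff_isUnit_det _).1 hM), one_mulVec]
  have hcont : Continuous fun p : (Fin n → ℝ) × (D → ℝ) =>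
      (MD Q A D)⁻¹ *ᵥ Sum.elim (-p.1) p.2 :=
    continuous_const.matrix_mulVec (continuous_pi fun k => by cases k <;> dsimp <;> fun_prop)
  have hpos : ∀ᶠ p in 𝓝 ((c, restr b D) : (Fin n → ℝ) × (D → ℝ)),
      ∀ i, 0 < ((MD Q A D)⁻¹ *ᵥ Sum.elim (-p.1) p.2) (Sum.inr i) :=
    eventually_all.2 fun i => continuousAt_const.eventually_lt
      ((continuous_apply _).comp hcont).continuousAt (by simpa [hsol] using hμ i)
  exact hpos.mono fun p hp => argminD_eq_singleton hQ hM hp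

end SubProblem

section Stability

variable {n : ℕ} {P : Type*} [TopologicalSpace P] {nrm : (Fin n → ℝ) → ℝ} {pd : P → P → ℝ}
  {G : P → Set (Fin n → ℝ)} {f : P → Fin n → ℝ} {pbar : P} {κ : ℝ}

lemma strongLipStable_of_eventually_eq_singleton (hG : ∀ᶠ p in 𝓝 pbar, G p = {f p})
    (hκ : 0 ≤ κ) (hf : ∀ p q, nrm (f p - f q) ≤ κ * pd p q) : StrongLipStable nrm pd G pbar := by
  refine ⟨_, hG, fun p (hp : G p = {f p}) => ?_, κ, hκ, ?_⟩
  · simp [hp]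
  · intro p (hp : G p = {f p}) q (hq : G q = {f q}) x hx y hy
    rw [hp, Set.mem_singleton_iff] at hx
    rw [hq, Set.mem_singleton_iff] at hy
    rw [hx, hy]
    exact hf p q

lemma aubinAt_of_eventually_eq_singleton (hG : ∀ᶠ p in 𝓝 pbar, G p = {f p})
    (hκ : 0 ≤ κ) (hf : ∀ p q, nrm (f p - f q) ≤ κ * pd p q) (xbar : Fin n → ℝ) :
    AubinAt nrm pd G pbar xbar := by
  refine ⟨κ, hκ, _, hG, Set.univ, univ_mem, ?_⟩
  intro p (hp : G p = {f p}) q (hq : G q = {f q}) y hy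
  rw [hq, Set.inter_univ, Set.mem_singleton_iff] at hy
  rw [hp, hy]
  simpa [dSet] using ENNReal.ofReal_le_ofReal (hf q p)

end Stability

end QPLip

theorem statement4_general {n m : ℕ}
    (nrm : (Fin n → ℝ) → ℝ) (hnrm : IsNorm nrm)
    (Q : Matrix (Fin n) (Fin n) ℝ) (hQ : Q.PosSemidef)
    (A : Matrix (Fin m) (Fin n) ℝ) (cb : Fin n → ℝ) (bb : Fin m → ℝ) (xb : Fin n → ℝ)
    (D : Finset (Fin m)) (hD : D ∈ MinKKT Q A cb bb xb)
    (hMD : IsUnit (MD Q A D)) :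
    (∃ V ∈ 𝓝 ((cb, restr bb D) : (Fin n → ℝ) × (D → ℝ)),
      ∀ p ∈ V, argminD Q A D p.1 p.2 =
        {(projMat n D * (MD Q A D)⁻¹).mulVec (Sum.elim (-p.1) p.2)}) ∧
    StrongLipStable nrm (fun p q => pDist nrm p q) (fun p : (Fin n → ℝ) × (D → ℝ) => argminD Q A D p.1 p.2) (cb, restr bb D) ∧
    AubinAt nrm (fun p q => pDist nrm p q) (fun p : (Fin n → ℝ) × (D → ℝ) => argminD Q A D p.1 p.2) (cb, restr bb D) xb := by
  have hS := eventually_argminD_eq_singleton hQ hD hMD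
  obtain ⟨κ, hκ, hlip⟩ := hnrm.exists_lipschitz_mulVec_sumElim (projMat n D * (MD Q A D)⁻¹)
  exact ⟨⟨_, hS, fun p hp => hp⟩, strongLipStable_of_eventually_eq_singleton hS hκ hlip,
    aubinAt_of_eventually_eq_singleton hS hκ hlip xb⟩

/-- for `D ∈ M_{c̄,b̄}(x̄)` with `M_D` nonsingular, near `(c̄, b̄_D)` the
mapping `S_D` is the singleton `{(I_n | 0) M_D⁻¹ (-c; β)}`; in particular `S_D` is strongly
Lipschitz stable and has the Aubin property at `((c̄,b̄_D),x̄)`. -/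
theorem statement4 {n m : ℕ} (hn : 0 < n) (hm : 0 < m)
    (nrm : (Fin n → ℝ) → ℝ) (hnrm : IsNorm nrm)
    (Q : Matrix (Fin n) (Fin n) ℝ) (hQ : Q.PosSemidef)
    (A : Matrix (Fin m) (Fin n) ℝ) (cb : Fin n → ℝ) (bb : Fin m → ℝ) (xb : Fin n → ℝ)
    (hx : xb ∈ argminSet Q A cb bb) (D : Finset (Fin m)) (hD : D ∈ MinKKT Q A cb bb xb)
    (hMD : IsUnit (MD Q A D)) :
    (∃ V ∈ 𝓝 ((cb, restr bb D) : (Fin n → ℝ) × (D → ℝ)),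
      ∀ p ∈ V, argminD Q A D p.1 p.2 =
        {(projMat n D * (MD Q A D)⁻¹).mulVec (Sum.elim (-p.1) p.2)}) ∧
    StrongLipStable nrm (fun p q => pDist nrm p q) (fun p : (Fin n → ℝ) × (D → ℝ) => argminD Q A D p.1 p.2) (cb, restr bb D) ∧
    AubinAt nrm (fun p q => pDist nrm p q) (fun p : (Fin n → ℝ) × (D → ℝ) => argminD Q A D p.1 p.2) (cb, restr bb D) xb :=
  statement4_general nrm hnrm Q hQ A cb bb xb D hD hMD
end

section
/- Let D ⊂ {1,…,m} be such that {a_i : i ∈ D} is linearly independent. Then the matrix M_D is nonsingular if and only if ker Q ∩ ker A_D = {0_n}. -/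
/-!
If `M_D (x, y) = 0`, then `Qx + A_Dᵀy = 0` and `A_D x = 0`. Pairing the first equation with `x`
gives `xᵀQx = -(A_D x)ᵀy = 0`, hence `Qx = 0` because `Q` is positive semidefinite; so `x` lies in
`ker Q ∩ ker A_D`, and once `x = 0` the equation `A_Dᵀy = 0` forces `y = 0` by the linear
independence of the rows of `A_D`. Conversely, a nonzero `x ∈ ker Q ∩ ker A_D` gives the nonzero
kernel vector `(x, 0)` of `M_D`.
-/

open Matrix Set Topology Filter
open scoped ENNReal

open QPLip

namespace Matrix

variable {ι κ : Type*} [Fintype ι] [Fintype κ]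

theorem fromBlocks_transpose_zero_mulVec_eq_zero_iff {R : Type*} [NonUnitalNonAssocSemiring R]
    (Q : Matrix ι ι R) (B : Matrix κ ι R) (x : ι → R) (y : κ → R) :
    fromBlocks Q Bᵀ B 0 *ᵥ Sum.elim x y = 0 ↔ Q *ᵥ x + Bᵀ *ᵥ y = 0 ∧ B *ᵥ x = 0 := by
  rw [fromBlocks_mulVec, ← Sum.elim_zero_zero, Sum.elim_eq_iff]
  simp

theorem PosSemidef.mulVec_eq_zero_of_add_transpose_mulVec_eq_zero {Q : Matrix ι ι ℝ}
    (hQ : Q.PosSemidef) {B : Matrix κ ι ℝ} {x : ι → ℝ} {y : κ → ℝ}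
    (hstat : Q *ᵥ x + Bᵀ *ᵥ y = 0) (hBx : B *ᵥ x = 0) : Q *ᵥ x = 0 := by
  have hQx : x ⬝ᵥ Q *ᵥ x + x ⬝ᵥ Bᵀ *ᵥ y = 0 := by
    rw [← dotProduct_add, hstat, dotProduct_zero]
  rw [dotProduct_mulVec x Bᵀ, vecMul_transpose, hBx, zero_dotProduct, add_zero] at hQx
  exact (hQ.dotProduct_mulVec_zero_iff x).mp hQx

theorem ker_inf_ker_eq_bot_of_isUnit_fromBlocks {R : Type*} [CommRing R] [DecidableEq ι]
    [DecidableEq κ] {Q : Matrix ι ι R} {B : Matrix κ ι R} (h : IsUnit (fromBlocks Q Bᵀ B 0)) :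
    LinearMap.ker Q.mulVecLin ⊓ LinearMap.ker B.mulVecLin = ⊥ := by
  rw [Submodule.eq_bot_iff]
  rintro x ⟨hQx, hBx⟩
  have hzero : fromBlocks Q Bᵀ B 0 *ᵥ Sum.elim x 0 = 0 := by
    rw [fromBlocks_transpose_zero_mulVec_eq_zero_iff]
    exact ⟨by simpa using hQx, hBx⟩
  have hv : Sum.elim x 0 = (0 : ι ⊕ κ → R) :=
    mulVec_injective_of_isUnit h (hzero.trans (mulVec_zero _).symm)
  rw [← Sum.elim_zero_zero, Sum.elim_eq_iff] at hv
  exact hv.1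

theorem isUnit_fromBlocks_transpose_zero_iff [DecidableEq ι] [DecidableEq κ]
    {Q : Matrix ι ι ℝ} (hQ : Q.PosSemidef) {B : Matrix κ ι ℝ} (hB : LinearIndependent ℝ B) :
    IsUnit (fromBlocks Q Bᵀ B 0) ↔
      LinearMap.ker Q.mulVecLin ⊓ LinearMap.ker B.mulVecLin = ⊥ := by
  refine ⟨ker_inf_ker_eq_bot_of_isUnit_fromBlocks, fun hker => ?_⟩
  rw [← mulVec_injective_iff_isUnit, ← coe_mulVecLin, ← LinearMap.ker_eq_bot,
    ker_mulVecLin_eq_bot_iff]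
  intro v hv
  rw [← Sum.elim_comp_inl_inr v, fromBlocks_transpose_zero_mulVec_eq_zero_iff] at hv
  rw [← Sum.elim_comp_inl_inr v]
  obtain ⟨hstat, hBx⟩ := hv
  have hx : v ∘ Sum.inl = 0 :=
    (Submodule.eq_bot_iff _).mp hker _
      ⟨hQ.mulVec_eq_zero_of_add_transpose_mulVec_eq_zero hstat hBx, hBx⟩
  rw [hx, mulVec_zero, zero_add] at hstat
  have hy : v ∘ Sum.inr = 0 := by
    have hBt : Function.Injective Bᵀ.mulVec := by
      rwa [mulVec_injective_iff, col_transpose]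
    exact hBt (hstat.trans (mulVec_zero _).symm)
  rw [hx, hy, Sum.elim_zero_zero]

end Matrix

theorem statement12_general {n m : ℕ}
    (Q : Matrix (Fin n) (Fin n) ℝ) (hQ : Q.PosSemidef)
    (A : Matrix (Fin m) (Fin n) ℝ) (D : Finset (Fin m))
    (hli : LinearIndependent ℝ (fun i : D => A i.1)) :
    IsUnit (MD Q A D) ↔
      LinearMap.ker Q.mulVecLin ⊓ LinearMap.ker (subA A D).mulVecLin = ⊥ :=
  isUnit_fromBlocks_transpose_zero_iff hQ hli

/-- for `D` with `{aᵢ : i ∈ D}` linearly independent, `M_D` is nonsingular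
iff `ker Q ∩ ker A_D = {0}`. -/
theorem statement12 {n m : ℕ} (hn : 0 < n) (hm : 0 < m)
    (Q : Matrix (Fin n) (Fin n) ℝ) (hQ : Q.PosSemidef)
    (A : Matrix (Fin m) (Fin n) ℝ) (D : Finset (Fin m))
    (hli : LinearIndependent ℝ (fun i : D => A i.1)) :
    IsUnit (MD Q A D) ↔
      LinearMap.ker Q.mulVecLin ⊓ LinearMap.ker (subA A D).mulVecLin = ⊥ :=
  statement12_general Q hQ A D hli
end

section
/- Let D_0 ⊂ D ⊂ {1,…,m} be such that {a_i : i ∈ D} is linearly independent. If M_{D_0} is nonsingular, then M_D is nonsingular. -/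
/-!
For positive semidefinite `Q`, the KKT matrix `[[Q, Bᵀ], [B, 0]]` is nonsingular exactly when
`ker Q ∩ ker B = 0` and the rows of `B` are linearly independent. Enlarging `D` only shrinks
`ker A_D`, so the first condition passes from `D₀` to `D`, and the second is the hypothesis on `D`.
-/

open Matrix Set Topology Filter
open scoped ENNReal

open QPLip


namespace Matrix

variable {ι κ : Type*} [Fintype ι]

theorem isUnit_iff_forall_mulVec_eq_zero [DecidableEq ι] {K : Type*} [Field K]
    {M : Matrix ι ι K} :
    IsUnit M ↔ ∀ v, M *ᵥ v = 0 → v = 0 := by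
  rw [isUnit_iff_isUnit_det, isUnit_iff_ne_zero, Ne, ← exists_mulVec_eq_zero_iff]
  grind

theorem linearIndependent_iff_forall_vecMul_eq_zero {R : Type*} [Ring R] {B : Matrix ι κ R} :
    LinearIndependent R (fun i => B i) ↔ ∀ y, y ᵥ* B = 0 → y = 0 := by
  simp only [Fintype.linearIndependent_iff, vecMul_eq_sum, funext_iff, Pi.zero_apply]

theorem fromBlocks_transpose_mulVec_eq_zero_iff [Fintype κ] {R : Type*} [CommRing R]
    (Q : Matrix κ κ R) (B : Matrix ι κ R) (x : κ → R) (y : ι → R) :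
    fromBlocks Q Bᵀ B 0 *ᵥ Sum.elim x y = 0 ↔ Q *ᵥ x + y ᵥ* B = 0 ∧ B *ᵥ x = 0 := by
  simp [fromBlocks_mulVec, mulVec_transpose, funext_iff, Sum.forall]

/-- Testing `Q x + Bᵀ y = 0` against `x` and using `B x = 0` gives `xᵀ Q x = 0`, hence `Q x = 0`. -/
theorem PosSemidef.fromBlocks_transpose_mulVec_eq_zero_iff [Fintype κ] {Q : Matrix κ κ ℝ}
    (hQ : Q.PosSemidef) (B : Matrix ι κ ℝ) (x : κ → ℝ) (y : ι → ℝ) :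
    fromBlocks Q Bᵀ B 0 *ᵥ Sum.elim x y = 0 ↔ Q *ᵥ x = 0 ∧ B *ᵥ x = 0 ∧ y ᵥ* B = 0 := by
  rw [Matrix.fromBlocks_transpose_mulVec_eq_zero_iff]
  constructor
  · rintro ⟨hstat, hBx⟩
    have hxQx : star x ⬝ᵥ Q *ᵥ x = 0 := by
      have := congrArg (x ⬝ᵥ ·) hstat
      simpa [dotProduct_add, dotProduct_comm x (y ᵥ* B), ← dotProduct_mulVec, hBx] using this
    have hQx := (hQ.dotProduct_mulVec_zero_iff x).mp hxQx
    exact ⟨hQx, hBx, by simpa [hQx] using hstat⟩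
  · rintro ⟨hQx, hBx, hyB⟩
    exact ⟨by rw [hQx, hyB, add_zero], hBx⟩

theorem PosSemidef.isUnit_fromBlocks_transpose_iff [Fintype κ] [DecidableEq ι]
    [DecidableEq κ] {Q : Matrix κ κ ℝ} (hQ : Q.PosSemidef) (B : Matrix ι κ ℝ) :
    IsUnit (fromBlocks Q Bᵀ B 0) ↔
      (∀ x, Q *ᵥ x = 0 → B *ᵥ x = 0 → x = 0) ∧ LinearIndependent ℝ (fun i => B i) := by
  rw [isUnit_iff_forall_mulVec_eq_zero, linearIndependent_iff_forall_vecMul_eq_zero]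
  constructor
  · intro h
    refine ⟨fun x hQx hBx => ?_, fun y hyB => ?_⟩
    · simpa using congrArg (· ∘ Sum.inl)
        (h (Sum.elim x 0) ((hQ.fromBlocks_transpose_mulVec_eq_zero_iff B x 0).mpr
          ⟨hQx, hBx, zero_vecMul B⟩))
    · simpa using congrArg (· ∘ Sum.inr)
        (h (Sum.elim 0 y) ((hQ.fromBlocks_transpose_mulVec_eq_zero_iff B 0 y).mpr
          ⟨mulVec_zero Q, mulVec_zero B, hyB⟩))
  · rintro ⟨hker, hli⟩ v hv
    rw [← Sum.elim_comp_inl_inr v, hQ.fromBlocks_transpose_mulVec_eq_zero_iff] at hv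
    obtain ⟨hQx, hBx, hyB⟩ := hv
    rw [← Sum.elim_comp_inl_inr v, hker _ hQx hBx, hli _ hyB, Sum.elim_zero_zero]

end Matrix

theorem QPLip.subA_mulVec_eq_zero_of_subset {n m : ℕ} (A : Matrix (Fin m) (Fin n) ℝ)
    {D0 D : Finset (Fin m)} (hsub : D0 ⊆ D) {x : Fin n → ℝ} (hx : subA A D *ᵥ x = 0) :
    subA A D0 *ᵥ x = 0 :=
  funext fun i => congrFun hx ⟨i.1, hsub i.2⟩

theorem statement13_general {n m : ℕ}
    (Q : Matrix (Fin n) (Fin n) ℝ) (hQ : Q.PosSemidef)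
    (A : Matrix (Fin m) (Fin n) ℝ) (D0 D : Finset (Fin m)) (hsub : D0 ⊆ D)
    (hli : LinearIndependent ℝ (fun i : D => A i.1))
    (hD0 : IsUnit (MD Q A D0)) :
    IsUnit (MD Q A D) := by
  rw [MD, hQ.isUnit_fromBlocks_transpose_iff] at hD0 ⊢
  exact ⟨fun x hQx hAx => hD0.1 x hQx (subA_mulVec_eq_zero_of_subset A hsub hAx), hli⟩

/-- for `D₀ ⊆ D` with `{aᵢ : i ∈ D}` linearly independent, if `M_{D₀}` is
nonsingular then so is `M_D`. -/
theorem statement13 {n m : ℕ} (hn : 0 < n) (hm : 0 < m)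
    (Q : Matrix (Fin n) (Fin n) ℝ) (hQ : Q.PosSemidef)
    (A : Matrix (Fin m) (Fin n) ℝ) (D0 D : Finset (Fin m)) (hsub : D0 ⊆ D)
    (hli : LinearIndependent ℝ (fun i : D => A i.1))
    (hD0 : IsUnit (MD Q A D0)) :
    IsUnit (MD Q A D) :=
  statement13_general Q hQ A D0 D hsub hli hD0
end
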